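/- arXiv:1001.0034 — 4 statements merged into one kernel-verified Lean document; each statement's English description precedes it below -/
import Mathlib

section
/- Let r ≥ 1 be an integer, let q be a real number with 0 < q < 1, let x > 0 be real, and let s ∈ ℂ with Re(s) > 0. Then ∫_0^∞ t^{s-1} · ( Σ_{(m_1,…,m_r) ∈ ℕ^r} (-q)^{m_1+⋯+m_r} e^{-[m_1+⋯+m_r+x]_q · t} ) dt = Γ(s) · Σ_{(m_1,…,m_r) ∈ ℕ^r} (-q)^{m_1+⋯+m_r} [m_1+⋯+m_r+x]_q^{-s}, where t^{s-1} = exp((s-1)·log t) for t > 0, Γ is the complex Gamma function, and the integrand series converges for every t > 0. -/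
/-!
Write `|m| = m₁ + ⋯ + mᵣ`. Since `[|m| + x]_q ≥ [x]_q > 0`, the exponentials in the integrand are
bounded by `1` and the series `∑ (-q)^|m| [|m| + x]_q^{-s}` converges absolutely, both being
dominated by the summable family `q^|m|`. This absolute convergence justifies exchanging the
Mellin transform with the sum, and each term contributes `∫₀^∞ t^{s-1} e^{-p t} dt = Γ(s) p^{-s}`.
-/

/-- The `q`-number `[y]_q = (1 - q^y)/(1 - q)`, with a real exponent (rpow). -/
noncomputable def qnum (q y : ℝ) : ℝ := (1 - q ^ y) / (1 - q)

open Complex Real Set MeasureTheory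

lemma qnum_pos {q y : ℝ} (hq0 : 0 < q) (hq1 : q < 1) (hy : 0 < y) : 0 < qnum q y :=
  div_pos (by linarith [Real.rpow_lt_one hq0.le hq1 hy]) (by linarith)

lemma qnum_mono {q : ℝ} (hq0 : 0 < q) (hq1 : q < 1) : Monotone (qnum q) := fun y z hyz => by
  have h := Real.rpow_le_rpow_of_exponent_ge hq0 hq1.le hyz
  exact (div_le_div_iff_of_pos_right (by linarith)).mpr (by linarith)

lemma summable_pow_sum_fin (r : ℕ) {q : ℝ} (hq0 : 0 ≤ q) (hq1 : q < 1) :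
    Summable (fun m : Fin r → ℕ => q ^ (∑ i, m i)) := by
  induction r with
  | zero => exact Summable.of_finite
  | succ n ih =>
    have h := (summable_geometric_of_lt_one hq0 hq1).mul_of_nonneg ih
      (fun k => pow_nonneg hq0 _) (fun m => pow_nonneg hq0 _)
    refine (((Fin.consEquiv fun _ => ℕ).symm.summable_iff
      (f := fun p : ℕ × (Fin n → ℕ) => q ^ p.1 * q ^ (∑ i, p.2 i))).mpr h).congr fun m => ?_
    simp [Fin.consEquiv, Fin.sum_univ_succ, pow_add, Fin.tail]

section DirichletExp

variable {ι : Type*} {a : ι → ℂ} {p : ι → ℝ}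

lemma summable_mul_exp_neg_mul (ha : Summable fun i => ‖a i‖) (hp : ∀ i, 0 ≤ p i)
    {t : ℝ} (ht : 0 ≤ t) :
    Summable fun i => a i * Complex.exp (-((p i * t : ℝ) : ℂ)) := by
  refine ha.of_norm_bounded fun i => ?_
  rw [norm_mul, ← ofReal_neg, Complex.norm_exp_ofReal]
  exact mul_le_of_le_one_right (norm_nonneg _)
    (Real.exp_le_one_iff.mpr (neg_nonpos.mpr (mul_nonneg (hp i) ht)))

lemma integral_cpow_mul_tsum_exp_neg_mul [Countable ι] {c : ℝ} (hc : 0 < c) (hp : ∀ i, c ≤ p i)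
    (ha : Summable fun i => ‖a i‖) {s : ℂ} (hs : 0 < s.re) :
    ∫ t in Ioi (0 : ℝ), (t : ℂ) ^ (s - 1) * ∑' i, a i * Complex.exp (-((p i * t : ℝ) : ℂ))
      = Gamma s * ∑' i, a i * (p i : ℂ) ^ (-s) := by
  have hp_pos : ∀ i, 0 < p i := fun i => hc.trans_le (hp i)
  have h_dirichlet : Summable fun i => ‖a i‖ / p i ^ s.re :=
    (ha.div_const (c ^ s.re)).of_nonneg_of_le
      (fun i => div_nonneg (norm_nonneg _) (Real.rpow_nonneg (hp_pos i).le _))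
      (fun i => div_le_div_of_nonneg_left (norm_nonneg _) (Real.rpow_pos_of_pos hc _)
        (Real.rpow_le_rpow hc.le (hp i) hs.le))
  set F : ℝ → ℂ := fun t => ∑' i, a i * Complex.exp (-((p i * t : ℝ) : ℂ))
  have h_mellin := hasSum_mellin (F := F)
    (fun i => Or.inr (hp_pos i)) hs (fun t ht => by
      simpa only [neg_mul, ofReal_exp, ofReal_neg] using
        (summable_mul_exp_neg_mul ha (fun i => (hp_pos i).le) (le_of_lt ht)).hasSum) h_dirichlet
  change mellin F s = _
  rw [← h_mellin.tsum_eq, ← tsum_mul_left]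
  congr 1 with i
  rw [cpow_neg, mul_div_assoc, div_eq_mul_inv]

end DirichletExp

theorem stmt3_general (r : ℕ) (q : ℝ) (hq0 : 0 < q) (hq1 : q < 1)
    (x : ℝ) (hx : 0 < x) (s : ℂ) (hs : 0 < s.re) :
    (∀ t : ℝ, 0 < t → Summable (fun m : Fin r → ℕ =>
      (-(q : ℂ)) ^ (∑ i, m i) *
        Complex.exp (-((qnum q (((∑ i, m i : ℕ) : ℝ) + x) * t : ℝ) : ℂ)))) ∧
    (∫ t in Set.Ioi (0 : ℝ), (t : ℂ) ^ (s - 1) *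
        ∑' m : Fin r → ℕ, (-(q : ℂ)) ^ (∑ i, m i) *
          Complex.exp (-((qnum q (((∑ i, m i : ℕ) : ℝ) + x) * t : ℝ) : ℂ)))
      = Complex.Gamma s *
          ∑' m : Fin r → ℕ, (-(q : ℂ)) ^ (∑ i, m i) *
            ((qnum q (((∑ i, m i : ℕ) : ℝ) + x) : ℝ) : ℂ) ^ (-s) := by
  have hc : 0 < qnum q x := qnum_pos hq0 hq1 hx
  have hp : ∀ m : Fin r → ℕ, qnum q x ≤ qnum q (((∑ i, m i : ℕ) : ℝ) + x) :=
    fun m => qnum_mono hq0 hq1 (le_add_of_nonneg_left (Nat.cast_nonneg _))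
  have ha : Summable fun m : Fin r → ℕ => ‖(-(q : ℂ)) ^ (∑ i, m i)‖ := by
    simpa only [norm_pow, norm_neg, norm_real, Real.norm_eq_abs, abs_of_pos hq0] using
      summable_pow_sum_fin r hq0.le hq1
  exact ⟨fun t ht => summable_mul_exp_neg_mul ha (fun m => hc.le.trans (hp m)) ht.le,
    integral_cpow_mul_tsum_exp_neg_mul hc hp ha hs⟩

theorem stmt3 (r : ℕ) (hr : 1 ≤ r) (q : ℝ) (hq0 : 0 < q) (hq1 : q < 1)
    (x : ℝ) (hx : 0 < x) (s : ℂ) (hs : 0 < s.re) :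
    (∀ t : ℝ, 0 < t → Summable (fun m : Fin r → ℕ =>
      (-(q : ℂ)) ^ (∑ i, m i) *
        Complex.exp (-((qnum q (((∑ i, m i : ℕ) : ℝ) + x) * t : ℝ) : ℂ)))) ∧
    (∫ t in Set.Ioi (0 : ℝ), (t : ℂ) ^ (s - 1) *
        ∑' m : Fin r → ℕ, (-(q : ℂ)) ^ (∑ i, m i) *
          Complex.exp (-((qnum q (((∑ i, m i : ℕ) : ℝ) + x) * t : ℝ) : ℂ)))
      = Complex.Gamma s *
          ∑' m : Fin r → ℕ, (-(q : ℂ)) ^ (∑ i, m i) *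
            ((qnum q (((∑ i, m i : ℕ) : ℝ) + x) : ℝ) : ℂ) ^ (-s) :=
  stmt3_general r q hq0 hq1 x hx s hs
end

section
/- Let f be an odd positive integer, let χ be a Dirichlet character modulo f with values in ℂ (extended to ℕ by χ(m) := χ(m mod f)), let r ≥ 1 and n ≥ 0 be integers, let q be a real number with 0 < q < 1, and let x > 0 be real. Then [2]_q^r · Σ_{(m_1,…,m_r) ∈ ℕ^r} (-q)^{m_1+⋯+m_r} (∏_{i=1}^r χ(m_i)) [m_1+⋯+m_r+x]_q^n = ([2]_q^r/(1-q)^n) · Σ_{l=0}^{n} C(n,l) (-1)^l q^{l x} · Σ_{(a_1,…,a_r) ∈ {0,…,f-1}^r} (∏_{j=1}^r χ(a_j)) (-q^{l+1})^{a_1+⋯+a_r} / (1+q^{(l+1)f})^r. -/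
/-!
Expanding `[S + x]_q^n = (1 - q^S q^x)^n / (1 - q)^n` binomially turns the summand into a finite
sum over `l` of terms `∏ i, χ(m_i) z^{m_i}` with `z = -q^{l+1}`, so each of these sums over `ℕ^r`
is the `r`-th power of the single series `∑ χ(m) z^m`. Splitting `m = k f + a` and using
periodicity of `χ`, that series is `(∑_{a<f} χ(a) z^a) / (1 - z^f)`, and `1 - z^f = 1 + q^{(l+1)f}`
because `f` is odd.
-/

open Finset

section PiProduct

variable {ι R : Type*} [NormedCommRing R] {h : ι → R}

lemma summable_norm_pi_prod (hh : Summable fun i => ‖h i‖) (r : ℕ) :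
    Summable fun m : Fin r → ι => ‖∏ i, h (m i)‖ := by
  induction r with
  | zero => exact .of_finite
  | succ r ih =>
    rw [← (Fin.consEquiv fun _ => ι).summable_iff]
    simpa [Function.comp_def, Fin.consEquiv, Fin.prod_univ_succ] using hh.mul_norm ih

lemma tsum_pi_prod [CompleteSpace R] (hh : Summable fun i => ‖h i‖) (r : ℕ) :
    ∑' m : Fin r → ι, ∏ i, h (m i) = (∑' i, h i) ^ r := by
  induction r with
  | zero => simp
  | succ r ih =>
    rw [← (Fin.consEquiv fun _ => ι).tsum_eq, pow_succ', ← ih,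
      tsum_mul_tsum_of_summable_norm hh (summable_norm_pi_prod hh r)]
    simp [Fin.consEquiv, Fin.prod_univ_succ]

end PiProduct

section PeriodicGeometric

variable {𝕜 : Type*} [NormedField 𝕜] {c : ℕ → 𝕜} {f : ℕ} [NeZero f] {z : 𝕜}

lemma Function.Periodic.mul_pow_divModEquiv_symm (hc : c.Periodic f) (p : ℕ × Fin f) :
    c ((Nat.divModEquiv f).symm p) * z ^ ((Nat.divModEquiv f).symm p)
      = (z ^ f) ^ p.1 * (c p.2 * z ^ (p.2 : ℕ)) := by
  have hperiod : c (p.2 + p.1 * f) = c p.2 := hc.nat_mul p.1 p.2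
  rw [Nat.divModEquiv_symm_apply, add_comm, hperiod, pow_add, pow_mul']
  ring

lemma Function.Periodic.summable_norm_mul_pow (hc : c.Periodic f) (hz : ‖z‖ < 1) :
    Summable fun m => ‖c m * z ^ m‖ := by
  have hzf : ‖z ^ f‖ < 1 := by
    rw [norm_pow]; exact pow_lt_one₀ (norm_nonneg z) hz (NeZero.ne f)
  rw [← (Nat.divModEquiv f).symm.summable_iff]
  simpa only [Function.comp_def, hc.mul_pow_divModEquiv_symm] using
    (summable_norm_geometric_of_norm_lt_one hzf).mul_norm
      (Summable.of_finite (f := fun a : Fin f => ‖c a * z ^ (a : ℕ)‖))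

lemma Function.Periodic.tsum_mul_pow [CompleteSpace 𝕜] (hc : c.Periodic f) (hz : ‖z‖ < 1) :
    ∑' m, c m * z ^ m = (∑ a : Fin f, c a * z ^ (a : ℕ)) / (1 - z ^ f) := by
  have hzf : ‖z ^ f‖ < 1 := by
    rw [norm_pow]; exact pow_lt_one₀ (norm_nonneg z) hz (NeZero.ne f)
  rw [← (Nat.divModEquiv f).symm.tsum_eq]
  simp only [hc.mul_pow_divModEquiv_symm]
  rw [← tsum_mul_tsum_of_summable_norm (summable_norm_geometric_of_norm_lt_one hzf)
    (Summable.of_finite (f := fun a : Fin f => ‖c a * z ^ (a : ℕ)‖)),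
    tsum_geometric_of_norm_lt_one hzf, tsum_fintype, div_eq_inv_mul]

lemma Function.Periodic.tsum_pi_prod_mul_pow [CompleteSpace 𝕜] (hc : c.Periodic f) (hz : ‖z‖ < 1)
    (r : ℕ) :
    ∑' m : Fin r → ℕ, ∏ i, c (m i) * z ^ m i
      = ∑ a : Fin r → Fin f, (∏ j, c (a j)) * z ^ (∑ j, (a j : ℕ)) / (1 - z ^ f) ^ r := by
  rw [tsum_pi_prod (hc.summable_norm_mul_pow hz), hc.tsum_mul_pow hz, div_pow,
    Fintype.sum_pow, sum_div]
  simp only [prod_mul_distrib, prod_pow_eq_pow_sum]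

end PeriodicGeometric

lemma qnum_natCast_add_pow {q : ℝ} (hq : 0 < q) (S : ℕ) (x : ℝ) (n : ℕ) :
    qnum q (S + x) ^ n
      = ∑ l ∈ range (n + 1), (n.choose l : ℝ) * (-1) ^ l * q ^ ((l : ℝ) * x) * (q ^ l) ^ S
          / (1 - q) ^ n := by
  have hpow : ∀ l : ℕ, (q ^ x) ^ l = q ^ ((l : ℝ) * x) := fun l => by
    rw [← Real.rpow_natCast, ← Real.rpow_mul hq.le, mul_comm]
  rw [qnum, div_pow, Real.rpow_add hq, Real.rpow_natCast, sub_eq_neg_add, add_pow, sum_div]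
  refine sum_congr rfl fun l _ => ?_
  rw [neg_pow, mul_pow, hpow, pow_right_comm]
  ring

theorem stmt5_general (f : ℕ) (hf0 : 0 < f) (hf : Odd f) (χ : DirichletCharacter ℂ f)
    (r : ℕ) (n : ℕ) (q : ℝ) (hq0 : 0 < q) (hq1 : q < 1)
    (x : ℝ) :
    (1 + (q : ℂ)) ^ r * ∑' m : Fin r → ℕ,
        (-(q : ℂ)) ^ (∑ i, m i) * (∏ i, χ ((m i : ℕ) : ZMod f)) *
          ((qnum q (((∑ i, m i : ℕ) : ℝ) + x) ^ n : ℝ) : ℂ)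
      = ((1 + (q : ℂ)) ^ r / (1 - (q : ℂ)) ^ n) *
          ∑ l ∈ Finset.range (n + 1),
            (n.choose l : ℂ) * (-1) ^ l * ((q ^ ((l : ℝ) * x) : ℝ) : ℂ) *
              ∑ a : Fin r → Fin f,
                (∏ j, χ (((a j : ℕ) : ℕ) : ZMod f)) *
                  (-(q : ℂ) ^ (l + 1)) ^ (∑ j, (a j : ℕ)) /
                    (1 + (q : ℂ) ^ ((l + 1) * f)) ^ r := by
  have : NeZero f := ⟨hf0.ne'⟩
  set z : ℕ → ℂ := fun l => -(q : ℂ) ^ (l + 1)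
  set coeff : ℕ → ℂ := fun l =>
    (n.choose l : ℂ) * (-1) ^ l * ((q ^ ((l : ℝ) * x) : ℝ) : ℂ) / (1 - (q : ℂ)) ^ n
  have hχ : (fun m : ℕ => χ m).Periodic f := fun m => by simp
  have hz : ∀ l, ‖z l‖ < 1 := fun l => by
    simpa [z, abs_of_pos hq0] using pow_lt_one₀ hq0.le hq1 l.succ_ne_zero
  have hzf : ∀ l, 1 - z l ^ f = 1 + (q : ℂ) ^ ((l + 1) * f) := fun l => by
    simp only [z, hf.neg_pow, pow_mul, sub_neg_eq_add]
  have hsummand : ∀ m : Fin r → ℕ,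
      (-(q : ℂ)) ^ (∑ i, m i) * (∏ i, χ (m i)) * ((qnum q ((∑ i, m i : ℕ) + x) ^ n : ℝ) : ℂ)
        = ∑ l ∈ range (n + 1), coeff l * ∏ i, χ (m i) * z l ^ m i := fun m => by
    rw [qnum_natCast_add_pow hq0, Complex.ofReal_sum, mul_sum]
    refine sum_congr rfl fun l _ => ?_
    simp only [z, coeff, prod_mul_distrib, prod_pow_eq_pow_sum]
    push_cast
    ring
  have hsummable : ∀ l, Summable fun m : Fin r → ℕ => coeff l * ∏ i, χ (m i) * z l ^ m i :=
    fun l => ((summable_norm_pi_prod (hχ.summable_norm_mul_pow (hz l)) r).of_norm).mul_left _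
  rw [tsum_congr hsummand, Summable.tsum_finsetSum fun l _ => hsummable l, mul_sum, mul_sum]
  refine sum_congr rfl fun l _ => ?_
  rw [tsum_mul_left, hχ.tsum_pi_prod_mul_pow (hz l), hzf]
  simp only [coeff, z]
  ring

theorem stmt5 (f : ℕ) (hf0 : 0 < f) (hf : Odd f) (χ : DirichletCharacter ℂ f)
    (r : ℕ) (hr : 1 ≤ r) (n : ℕ) (q : ℝ) (hq0 : 0 < q) (hq1 : q < 1)
    (x : ℝ) (hx : 0 < x) :
    (1 + (q : ℂ)) ^ r * ∑' m : Fin r → ℕ,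
        (-(q : ℂ)) ^ (∑ i, m i) * (∏ i, χ ((m i : ℕ) : ZMod f)) *
          ((qnum q (((∑ i, m i : ℕ) : ℝ) + x) ^ n : ℝ) : ℂ)
      = ((1 + (q : ℂ)) ^ r / (1 - (q : ℂ)) ^ n) *
          ∑ l ∈ Finset.range (n + 1),
            (n.choose l : ℂ) * (-1) ^ l * ((q ^ ((l : ℝ) * x) : ℝ) : ℂ) *
              ∑ a : Fin r → Fin f,
                (∏ j, χ (((a j : ℕ) : ℕ) : ZMod f)) *
                  (-(q : ℂ) ^ (l + 1)) ^ (∑ j, (a j : ℕ)) /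
                    (1 + (q : ℂ) ^ ((l + 1) * f)) ^ r :=
  stmt5_general f hf0 hf χ r n q hq0 hq1 x
end

section
/- Let f be an odd positive integer, let χ be a Dirichlet character modulo f with values in ℂ (extended to ℕ by χ(m) := χ(m mod f)), let r ≥ 1 and n ≥ 0 be integers, let h be an integer with h ≥ r, let q be a real number with 0 < q < 1, and let x > 0 be real. Then [2]_q^r · Σ_{(m_1,…,m_r) ∈ ℕ^r} (-1)^{m_1+⋯+m_r} q^{Σ_{j=1}^r (h-j+1) m_j} (∏_{j=1}^r χ(m_j)) [m_1+⋯+m_r+x]_q^n = ([2]_q^r/[2]_{q^f}^r) · [f]_q^n · Σ_{(a_1,…,a_r) ∈ {0,…,f-1}^r} (-1)^{a_1+⋯+a_r} (∏_{j=1}^r χ(a_j)) q^{Σ_{j=1}^r (h-j+1) a_j} · Z(n, (x+a_1+⋯+a_r)/f), where Z(n,y) := [2]_{q^f}^r · Σ_{(k_1,…,k_r) ∈ ℕ^r} (-1)^{k_1+⋯+k_r} (q^f)^{Σ_{j=1}^r (h-j+1) k_j} [k_1+⋯+k_r+y]_{q^f}^n. -/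
/-- `Z(n, y) = ζ^{(h)}_{q^f, r}(-n, y)
  = [2]_{q^f}^r · Σ_{k ∈ ℕ^r} (-1)^{|k|} (q^f)^{Σ_j (h-j+1) k_j} [|k| + y]_{q^f}^n`. -/
noncomputable def Zfun (q : ℝ) (f r : ℕ) (h : ℤ) (n : ℕ) (y : ℝ) : ℝ :=
  (1 + q ^ f) ^ r * ∑' k : Fin r → ℕ,
    (-1 : ℝ) ^ (∑ j, k j) *
      (q ^ f) ^ (∑ j : Fin r, (h - ((j : ℤ) + 1) + 1) * (k j : ℤ)) *
        qnum (q ^ f) (((∑ j, k j : ℕ) : ℝ) + y) ^ n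

theorem summable_pow_sum_pi {Q : ℝ} (hQ0 : 0 ≤ Q) (hQ1 : Q < 1) :
    ∀ r : ℕ, Summable fun m : Fin r → ℕ => Q ^ ∑ j, m j
  | 0 => Summable.of_finite
  | r + 1 => by
    have hprod := (summable_geometric_of_lt_one hQ0 hQ1).mul_of_nonneg
      (summable_pow_sum_pi hQ0 hQ1 r) (fun _ => pow_nonneg hQ0 _) (fun _ => pow_nonneg hQ0 _)
    refine (Fin.consEquiv fun _ => ℕ).summable_iff.mp (hprod.congr fun p => ?_)
    simp [Fin.sum_univ_succ, pow_add]

theorem tsum_pi_nat_eq_sum_tsum_mul_add {R : Type*} [AddCommGroup R] [UniformSpace R]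
    [IsUniformAddGroup R] [CompleteSpace R] [T0Space R] {r : ℕ} {F : (Fin r → ℕ) → R}
    (hF : Summable F) (f : ℕ) [NeZero f] :
    ∑' m, F m = ∑ a : Fin r → Fin f, ∑' k : Fin r → ℕ, F fun j => k j * f + a j := by
  let e : (Fin r → ℕ) ≃ (Fin r → Fin f) × (Fin r → ℕ) :=
    (Equiv.piCongrRight fun _ => (Nat.divModEquiv f).trans (Equiv.prodComm _ _)).trans
      (Equiv.arrowProdEquivProdArrow _ _ _)
  have hFe : Summable (F ∘ e.symm) := e.symm.summable_iff.mpr hF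
  calc ∑' m, F m = ∑' p, F (e.symm p) := (e.symm.tsum_eq F).symm
    _ = ∑' (a) (k), F (e.symm (a, k)) :=
      hFe.tsum_prod' fun a => hFe.comp_injective (Prod.mk_right_injective a)
    _ = _ := tsum_fintype _

theorem abs_qnum_le {Q x t : ℝ} (hQ0 : 0 < Q) (hQ1 : Q < 1) (hxt : x ≤ t) :
    |qnum Q t| ≤ (1 + Q ^ x) / (1 - Q) := by
  have hQt : Q ^ t ≤ Q ^ x := Real.rpow_le_rpow_of_exponent_ge hQ0 hQ1.le hxt
  rw [qnum, abs_div, abs_of_pos (sub_pos.mpr hQ1)]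
  gcongr
  calc |1 - Q ^ t| ≤ |1| + |Q ^ t| := abs_sub _ _
    _ ≤ 1 + Q ^ x := by rw [abs_one, abs_of_pos (Real.rpow_pos_of_pos hQ0 t)]; gcongr

theorem qnum_natCast_mul {Q : ℝ} (hQ0 : 0 < Q) (hQ1 : Q < 1) {f : ℕ} (hf : f ≠ 0) (y : ℝ) :
    qnum Q (f * y) = qnum Q f * qnum (Q ^ f) y := by
  have hQf : Q ^ f < 1 := pow_lt_one₀ hQ0.le hQ1 hf
  rw [qnum, qnum, qnum, Real.rpow_natCast, Real.rpow_mul hQ0.le, Real.rpow_natCast]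
  field_simp [(sub_pos.mpr hQf).ne', (sub_pos.mpr hQ1).ne']

section

variable {r : ℕ}

def hWeight (h : ℤ) (m : Fin r → ℕ) : ℤ := ∑ j : Fin r, (h - ((j : ℤ) + 1) + 1) * (m j : ℤ)

theorem sum_le_hWeight {h : ℤ} (hrh : (r : ℤ) ≤ h) (m : Fin r → ℕ) :
    ((∑ j, m j : ℕ) : ℤ) ≤ hWeight h m := by
  rw [Nat.cast_sum]
  refine Finset.sum_le_sum fun j _ => le_mul_of_one_le_left (Int.natCast_nonneg _) ?_
  have := j.isLt
  omega

theorem hWeight_mul_add (h : ℤ) (f : ℕ) (k a : Fin r → ℕ) :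
    hWeight h (fun j => k j * f + a j) = f * hWeight h k + hWeight h a := by
  simp only [hWeight, Finset.mul_sum, ← Finset.sum_add_distrib]
  refine Finset.sum_congr rfl fun j _ => ?_
  push_cast
  ring

noncomputable def zetaSummand (Q : ℝ) (h : ℤ) (n : ℕ) (y : ℝ) (k : Fin r → ℕ) : ℝ :=
  (-1) ^ (∑ j, k j) * Q ^ hWeight h k * qnum Q ((∑ j, k j : ℕ) + y) ^ n

theorem norm_zetaSummand_le {Q : ℝ} (hQ0 : 0 < Q) (hQ1 : Q < 1) {h : ℤ} (hrh : (r : ℤ) ≤ h)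
    (n : ℕ) (y : ℝ) (k : Fin r → ℕ) :
    ‖zetaSummand Q h n y k‖ ≤ ((1 + Q ^ y) / (1 - Q)) ^ n * Q ^ ∑ j, k j := by
  have hw : Q ^ hWeight h k ≤ Q ^ ∑ j, k j := by
    rw [← zpow_natCast]
    exact zpow_le_zpow_right_of_le_one₀ hQ0 hQ1.le (sum_le_hWeight hrh k)
  have hq : |qnum Q ((∑ j, k j : ℕ) + y)| ≤ (1 + Q ^ y) / (1 - Q) :=
    abs_qnum_le hQ0 hQ1 (le_add_of_nonneg_left (Nat.cast_nonneg _))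
  rw [zetaSummand, Real.norm_eq_abs, abs_mul, abs_mul, abs_pow, abs_neg, abs_one, one_pow,
    one_mul, abs_of_pos (zpow_pos hQ0 _), abs_pow, mul_comm]
  exact mul_le_mul (pow_le_pow_left₀ (abs_nonneg _) hq n) hw (zpow_pos hQ0 _).le (by positivity)

theorem zetaSummand_mul_add {q : ℝ} (hq0 : 0 < q) (hq1 : q < 1) {f : ℕ} (hf : Odd f) (h : ℤ)
    (n : ℕ) (x : ℝ) (k a : Fin r → ℕ) :
    zetaSummand q h n x (fun j => k j * f + a j) =
      (-1) ^ (∑ j, a j) * q ^ hWeight h a * qnum q f ^ n *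
        zetaSummand (q ^ f) h n ((x + ∑ j, (a j : ℝ)) / f) k := by
  have hf0 : (f : ℝ) ≠ 0 := by exact_mod_cast hf.pos.ne'
  have hsum : ∑ j, (k j * f + a j) = (∑ j, k j) * f + ∑ j, a j := by
    rw [Finset.sum_add_distrib, Finset.sum_mul]
  have harg : ((∑ j, (k j * f + a j) : ℕ) : ℝ) + x =
      f * ((∑ j, k j : ℕ) + (x + ∑ j, (a j : ℝ)) / f) := by
    rw [hsum]
    push_cast
    field_simp
    ring
  simp only [zetaSummand]
  rw [hWeight_mul_add, harg, qnum_natCast_mul hq0 hq1 hf.pos.ne', hsum, pow_add, pow_mul',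
    hf.neg_one_pow, zpow_add₀ hq0.ne', zpow_mul, zpow_natCast]
  ring

theorem tsum_prod_dirichletCharacter_mul_zetaSummand {f : ℕ} (hf : Odd f)
    (χ : DirichletCharacter ℂ f) {h : ℤ} (hrh : (r : ℤ) ≤ h) {q : ℝ} (hq0 : 0 < q)
    (hq1 : q < 1) (n : ℕ) (x : ℝ) :
    ∑' m : Fin r → ℕ, (∏ j, χ (m j)) * (zetaSummand q h n x m : ℂ) =
      (qnum q f ^ n : ℝ) * ∑ a : Fin r → Fin f, (∏ j, χ (a j : ℕ)) *
        (((-1) ^ (∑ j, (a j : ℕ)) * q ^ hWeight h (fun j => a j) : ℝ) : ℂ) *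
          ∑' k : Fin r → ℕ, (zetaSummand (q ^ f) h n ((x + ∑ j, ((a j : ℕ) : ℝ)) / f) k : ℂ) := by
  have : NeZero f := ⟨hf.pos.ne'⟩
  have hsummable :
      Summable fun m : Fin r → ℕ => (∏ j, χ (m j)) * (zetaSummand q h n x m : ℂ) := by
    refine .of_norm_bounded ((summable_pow_sum_pi hq0.le hq1 r).mul_left
      (((1 + q ^ x) / (1 - q)) ^ n)) fun m => ?_
    rw [norm_mul, norm_prod, Complex.norm_real]
    calc (∏ j, ‖χ (m j)‖) * ‖zetaSummand q h n x m‖ ≤ 1 * ‖zetaSummand q h n x m‖ := by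
          gcongr
          exact Finset.prod_le_one (fun _ _ => norm_nonneg _) fun j _ => χ.norm_le_one _
      _ ≤ _ := (one_mul _).trans_le (norm_zetaSummand_le hq0 hq1 hrh n x m)
  rw [tsum_pi_nat_eq_sum_tsum_mul_add hsummable f, Finset.mul_sum]
  refine Finset.sum_congr rfl fun a _ => ?_
  have hχ : ∀ k : Fin r → ℕ, ∏ j, χ ↑(k j * f + a j) = ∏ j, χ (a j : ℕ) := fun k => by simp
  simp_rw [hχ, zetaSummand_mul_add hq0 hq1 hf, Complex.ofReal_mul, ← mul_assoc]
  rw [tsum_mul_left]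
  ring

end

theorem stmt9_general (f : ℕ) (hf : Odd f) (χ : DirichletCharacter ℂ f)
    (r : ℕ) (n : ℕ) (h : ℤ) (hh : (r : ℤ) ≤ h)
    (q : ℝ) (hq0 : 0 < q) (hq1 : q < 1) (x : ℝ) :
    (1 + (q : ℂ)) ^ r * ∑' m : Fin r → ℕ,
        (-1 : ℂ) ^ (∑ j, m j) *
          ((q ^ (∑ j : Fin r, (h - ((j : ℤ) + 1) + 1) * (m j : ℤ)) : ℝ) : ℂ) *
            (∏ j, χ ((m j : ℕ) : ZMod f)) *
              ((qnum q (((∑ j, m j : ℕ) : ℝ) + x) ^ n : ℝ) : ℂ)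
      = ((1 + (q : ℂ)) ^ r / (1 + (q : ℂ) ^ f) ^ r) * ((qnum q (f : ℝ) ^ n : ℝ) : ℂ) *
          ∑ a : Fin r → Fin f,
            (-1 : ℂ) ^ (∑ j, (a j : ℕ)) * (∏ j, χ (((a j : ℕ) : ℕ) : ZMod f)) *
              ((q ^ (∑ j : Fin r, (h - ((j : ℤ) + 1) + 1) * ((a j : ℕ) : ℤ)) : ℝ) : ℂ) *
                ((Zfun q f r h n ((x + ∑ j, ((a j : ℕ) : ℝ)) / f) : ℝ) : ℂ) := by
  have hsummand : ∀ m : Fin r → ℕ,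
      (-1 : ℂ) ^ (∑ j, m j) *
        ((q ^ (∑ j : Fin r, (h - ((j : ℤ) + 1) + 1) * (m j : ℤ)) : ℝ) : ℂ) * (∏ j, χ (m j)) *
        ((qnum q (((∑ j, m j : ℕ) : ℝ) + x) ^ n : ℝ) : ℂ) =
      (∏ j, χ (m j)) * (zetaSummand q h n x m : ℂ) := fun m => by
    simp only [zetaSummand, hWeight]
    push_cast
    ring
  have hZfun : ∀ y, Zfun q f r h n y = (1 + q ^ f) ^ r * ∑' k, zetaSummand (q ^ f) h n y k :=
    fun _ => rfl
  have hqf : (1 + (q : ℂ) ^ f) ^ r ≠ 0 := by exact_mod_cast (by positivity : (1 + q ^ f) ^ r ≠ 0)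
  rw [tsum_congr hsummand,
    tsum_prod_dirichletCharacter_mul_zetaSummand hf χ hh hq0 hq1, Finset.mul_sum, Finset.mul_sum,
    Finset.mul_sum]
  refine Finset.sum_congr rfl fun a _ => ?_
  rw [hZfun, hWeight]
  push_cast
  field_simp

theorem stmt9 (f : ℕ) (hf0 : 0 < f) (hf : Odd f) (χ : DirichletCharacter ℂ f)
    (r : ℕ) (hr : 1 ≤ r) (n : ℕ) (h : ℤ) (hh : (r : ℤ) ≤ h)
    (q : ℝ) (hq0 : 0 < q) (hq1 : q < 1) (x : ℝ) (hx : 0 < x) :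
    (1 + (q : ℂ)) ^ r * ∑' m : Fin r → ℕ,
        (-1 : ℂ) ^ (∑ j, m j) *
          ((q ^ (∑ j : Fin r, (h - ((j : ℤ) + 1) + 1) * (m j : ℤ)) : ℝ) : ℂ) *
            (∏ j, χ ((m j : ℕ) : ZMod f)) *
              ((qnum q (((∑ j, m j : ℕ) : ℝ) + x) ^ n : ℝ) : ℂ)
      = ((1 + (q : ℂ)) ^ r / (1 + (q : ℂ) ^ f) ^ r) * ((qnum q (f : ℝ) ^ n : ℝ) : ℂ) *
          ∑ a : Fin r → Fin f,
            (-1 : ℂ) ^ (∑ j, (a j : ℕ)) * (∏ j, χ (((a j : ℕ) : ℕ) : ZMod f)) *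
              ((q ^ (∑ j : Fin r, (h - ((j : ℤ) + 1) + 1) * ((a j : ℕ) : ℤ)) : ℝ) : ℂ) *
                ((Zfun q f r h n ((x + ∑ j, ((a j : ℕ) : ℝ)) / f) : ℝ) : ℂ) :=
  stmt9_general f hf χ r n h hh q hq0 hq1 x
end

section
/- Let r ≥ 1 and n ≥ 0 be integers, let q be a real number with 0 < q < 1, let x > 0 be real, let a_1, …, a_r be positive real numbers, and let b_1, …, b_r be nonnegative integers. Then the series [2]_q^r · Σ_{(m_1,…,m_r) ∈ ℕ^r} (-1)^{m_1+⋯+m_r} q^{Σ_{i=1}^r (b_i+1) m_i} [a_1 m_1 + ⋯ + a_r m_r + x]_q^n converges absolutely and equals ([2]_q^r/(1-q)^n) · Σ_{l=0}^{n} C(n,l) (-1)^l q^{l x} / ∏_{i=1}^{r} (1+q^{l a_i + b_i + 1}). -/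
/-!
Expanding `[y]_q ^ n = (1 - q^y)^n / (1 - q)^n` by the binomial theorem turns each summand into a
finite combination, over `l ≤ n`, of products `∏ i, (-q^(l a_i + b_i + 1)) ^ m_i`. Summed over
`m ∈ ℕ^r`, such a product is a product of `r` absolutely convergent geometric series, with sum
`∏ i, 1 / (1 + q^(l a_i + b_i + 1))`.
-/

open Finset

section FinProd

variable {R β : Type*} [NormedCommRing R]

theorem summable_norm_prod_fin {r : ℕ} {f : Fin r → β → R}
    (hf : ∀ i, Summable fun k => ‖f i k‖) :
    Summable fun m : Fin r → β => ‖∏ i, f i (m i)‖ := by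
  induction r with
  | zero => exact .of_finite
  | succ r ih =>
    rw [← (Fin.consEquiv fun _ => β).summable_iff]
    simpa [Function.comp_def, Fin.consEquiv, Fin.prod_univ_succ] using
      (hf 0).mul_norm (ih fun i => hf i.succ)

theorem tsum_prod_fin [CompleteSpace R] {r : ℕ} {f : Fin r → β → R}
    (hf : ∀ i, Summable fun k => ‖f i k‖) :
    ∑' m : Fin r → β, ∏ i, f i (m i) = ∏ i, ∑' k, f i k := by
  induction r with
  | zero => simp
  | succ r ih =>
    rw [← (Fin.consEquiv fun _ => β).tsum_eq, Fin.prod_univ_succ, ← ih fun i => hf i.succ,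
      tsum_mul_tsum_of_summable_norm (hf 0) (summable_norm_prod_fin fun i => hf i.succ)]
    simp [Fin.consEquiv, Fin.prod_univ_succ]

end FinProd

theorem hasSum_prod_geometric {K : Type*} [NormedField K] [CompleteSpace K] {r : ℕ}
    {u : Fin r → K} (hu : ∀ i, ‖u i‖ < 1) :
    HasSum (fun m : Fin r → ℕ => ∏ i, u i ^ m i) (∏ i, (1 - u i)⁻¹) := by
  have hf : ∀ i, Summable fun k => ‖u i ^ k‖ := fun i =>
    summable_norm_geometric_of_norm_lt_one (hu i)
  have h := (summable_norm_prod_fin hf).of_norm.hasSum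
  simpa only [tsum_prod_fin hf, tsum_geometric_of_norm_lt_one (hu _)] using h

theorem qnum_pow_eq_sum {q : ℝ} (hq : 0 ≤ q) (y : ℝ) (n : ℕ) :
    qnum q y ^ n =
      ∑ l ∈ range (n + 1), (n.choose l : ℝ) * (-1) ^ l * q ^ (l * y) / (1 - q) ^ n := by
  rw [qnum, div_pow, sub_eq_neg_add, add_pow, sum_div]
  refine sum_congr rfl fun l _ => ?_
  rw [neg_pow, mul_comm (l : ℝ), Real.rpow_mul_natCast hq]
  ring

theorem neg_one_pow_mul_pow_mul_rpow_eq {ι : Type*} [Fintype ι] {q : ℝ} (hq : 0 < q) (x : ℝ)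
    (a : ι → ℝ) (b m : ι → ℕ) (l : ℕ) :
    (-1 : ℝ) ^ (∑ i, m i) * q ^ (∑ i, (b i + 1) * m i) * q ^ ((l : ℝ) * ((∑ i, a i * m i) + x))
      = q ^ ((l : ℝ) * x) * ∏ i, (-q ^ ((l : ℝ) * a i + b i + 1)) ^ m i := by
  have hexp : (l : ℝ) * ((∑ i, a i * m i) + x) = (l : ℝ) * x + ∑ i, (l * a i) * m i := by
    rw [mul_add, mul_sum]; ring_nf
  have hfactor : ∀ i, (-q ^ ((l : ℝ) * a i + b i + 1)) ^ m i
      = (-1) ^ m i * q ^ ((b i + 1) * m i) * q ^ ((l * a i) * m i) := by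
    intro i
    rw [neg_pow, Real.rpow_mul hq.le, Real.rpow_natCast, pow_mul, ← mul_pow, ← mul_pow,
      Real.rpow_add hq, Real.rpow_add hq]
    norm_cast
    ring
  rw [prod_congr rfl fun i _ => hfactor i, prod_mul_distrib, prod_mul_distrib, prod_pow_eq_pow_sum,
    prod_pow_eq_pow_sum, hexp, Real.rpow_add hq, Real.rpow_sum_of_pos hq]
  ring

theorem stmt12_general (r : ℕ) (n : ℕ) (q : ℝ) (hq0 : 0 < q) (hq1 : q < 1)
    (x : ℝ) (a : Fin r → ℝ) (ha : ∀ i, 0 < a i) (b : Fin r → ℕ) :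
    Summable (fun m : Fin r → ℕ =>
      (-1 : ℝ) ^ (∑ i, m i) * q ^ (∑ i, (b i + 1) * m i) *
        qnum q ((∑ i, a i * m i) + x) ^ n) ∧
    (1 + q) ^ r * (∑' m : Fin r → ℕ,
        (-1 : ℝ) ^ (∑ i, m i) * q ^ (∑ i, (b i + 1) * m i) *
          qnum q ((∑ i, a i * m i) + x) ^ n)
      = ((1 + q) ^ r / (1 - q) ^ n) *
          ∑ l ∈ Finset.range (n + 1),
            (n.choose l : ℝ) * (-1) ^ l * q ^ ((l : ℝ) * x) /
              ∏ i : Fin r, (1 + q ^ ((l : ℝ) * a i + (b i : ℝ) + 1)) := by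
  have hratio : ∀ (l : ℕ) i, ‖-q ^ ((l : ℝ) * a i + b i + 1)‖ < 1 := fun l i => by
    rw [norm_neg, Real.norm_of_nonneg (by positivity)]
    exact Real.rpow_lt_one hq0.le hq1 (by have := ha i; positivity)
  have hterm : ∀ m : Fin r → ℕ,
      (-1 : ℝ) ^ (∑ i, m i) * q ^ (∑ i, (b i + 1) * m i) * qnum q ((∑ i, a i * m i) + x) ^ n
        = ∑ l ∈ range (n + 1), (n.choose l : ℝ) * (-1) ^ l * q ^ ((l : ℝ) * x) / (1 - q) ^ n *
            ∏ i, (-q ^ ((l : ℝ) * a i + b i + 1)) ^ m i := fun m => by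
    rw [qnum_pow_eq_sum hq0.le, mul_sum]
    refine sum_congr rfl fun l _ => ?_
    linear_combination ((n.choose l : ℝ) * (-1) ^ l / (1 - q) ^ n) *
      neg_one_pow_mul_pow_mul_rpow_eq hq0 x a b m l
  have hsum := hasSum_sum fun l (_ : l ∈ range (n + 1)) =>
    (hasSum_prod_geometric (hratio l)).mul_left
      ((n.choose l : ℝ) * (-1) ^ l * q ^ ((l : ℝ) * x) / (1 - q) ^ n)
  simp only [← hterm, sub_neg_eq_add] at hsum
  refine ⟨hsum.summable, ?_⟩
  rw [hsum.tsum_eq, mul_sum, mul_sum]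
  refine sum_congr rfl fun l _ => ?_
  rw [prod_inv_distrib]
  ring

theorem stmt12 (r : ℕ) (hr : 1 ≤ r) (n : ℕ) (q : ℝ) (hq0 : 0 < q) (hq1 : q < 1)
    (x : ℝ) (hx : 0 < x) (a : Fin r → ℝ) (ha : ∀ i, 0 < a i) (b : Fin r → ℕ) :
    Summable (fun m : Fin r → ℕ =>
      (-1 : ℝ) ^ (∑ i, m i) * q ^ (∑ i, (b i + 1) * m i) *
        qnum q ((∑ i, a i * m i) + x) ^ n) ∧
    (1 + q) ^ r * (∑' m : Fin r → ℕ,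
        (-1 : ℝ) ^ (∑ i, m i) * q ^ (∑ i, (b i + 1) * m i) *
          qnum q ((∑ i, a i * m i) + x) ^ n)
      = ((1 + q) ^ r / (1 - q) ^ n) *
          ∑ l ∈ Finset.range (n + 1),
            (n.choose l : ℝ) * (-1) ^ l * q ^ ((l : ℝ) * x) /
              ∏ i : Fin r, (1 + q ^ ((l : ℝ) * a i + (b i : ℝ) + 1)) :=
  stmt12_general r n q hq0 hq1 x a ha b
end
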